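/- arXiv:1211.6816 — 2 statements merged into one kernel-verified Lean document; each statement's English description precedes it below -/
import Mathlib

section
/- Let R be a commutative differential graded algebra over a field k, with differential d, and let M be a dg R-module whose underlying graded module is projective over the underlying graded algebra. Given a connection ∇ : M → Ω¹_R ⊗_R M (i.e. a k-linear map satisfying the graded Leibniz rule ∇(r·m) = (d_dR r)·m + (-1)^{|r|} r·∇m), the Atiyah class At(∇) := ∇ ∘ d_M − d_{Ω¹⊗M} ∘ ∇ is closed: d_{Ω¹⊗End M} At(∇) = 0. -/
/-!
Writing `D` for the differentials, `At(∇) = [∇, D]` is a commutator with `D`, so its differential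
`[D, [∇, D]] = ∇ ∘ D² - D² ∘ ∇` vanishes because `D² = 0` on `M` and on `Ω¹_R ⊗_R M`.
-/

namespace LinearMap

variable {R M N : Type*} [Semiring R] [AddCommGroup M] [AddCommGroup N] [Module R M] [Module R N]

theorem comp_commutator_add_commutator_comp (f : M →ₗ[R] N) (dM : Module.End R M)
    (dN : Module.End R N) :
    dN ∘ₗ (f ∘ₗ dM - dN ∘ₗ f) + (f ∘ₗ dM - dN ∘ₗ f) ∘ₗ dM = f ∘ₗ (dM ∘ₗ dM) - (dN ∘ₗ dN) ∘ₗ f := by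
  ext m
  simp only [add_apply, sub_apply, comp_apply, map_sub]
  abel

end LinearMap

theorem atiyah_class_closed_general
    {k : Type} [Field k]
    (M : Type) [AddCommGroup M] [Module k M]
    (dM : M →ₗ[k] M) (hdM2 : ∀ m, dM (dM m) = 0)
    (N : Type) [AddCommGroup N] [Module k N]
    (dN : N →ₗ[k] N) (hdN2 : ∀ x, dN (dN x) = 0)
    (conn : M →ₗ[k] N) :
    ∀ m : M,
      dN (conn (dM m) - dN (conn m)) + (conn (dM (dM m)) - dN (conn (dM m))) = 0 := by
  intro m
  calc _ = conn (dM (dM m)) - dN (dN (conn m)) :=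
        LinearMap.congr_fun (conn.comp_commutator_add_commutator_comp dM dN) m
    _ = 0 := by rw [hdM2, hdN2, map_zero, sub_zero]

theorem atiyah_class_closed
    {k : Type} [Field k]
    (R : Type) [CommRing R] [Algebra k R]
    (ε : R →ₐ[k] R) (hεε : ∀ r, ε (ε r) = r)
    (dR : R →ₗ[k] R) (hdR2 : ∀ r, dR (dR r) = 0)
    (hdRodd : ∀ r, ε (dR r) = - dR (ε r))
    (hdRleib : ∀ a b, dR (a * b) = dR a * b + ε a * dR b)
    (M : Type) [AddCommGroup M] [Module k M] [Module R M] [IsScalarTower k R M]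
    (hproj : Module.Projective R M)
    (εM : M →ₗ[k] M) (hεM : ∀ m, εM (εM m) = m)
    (hεMsmul : ∀ (r : R) (m : M), εM (r • m) = ε r • εM m)
    (dM : M →ₗ[k] M) (hdM2 : ∀ m, dM (dM m) = 0)
    (hdMleib : ∀ (r : R) (m : M), dM (r • m) = dR r • m + ε r • dM m)
    (Ω1 : Type) [AddCommGroup Ω1] [Module k Ω1] [Module R Ω1] [IsScalarTower k R Ω1]
    (ddr : R →ₗ[k] Ω1)
    (hddr : ∀ a b : R, ddr (a * b) = a • ddr b + b • ddr a)
    (N : Type) [AddCommGroup N] [Module k N] [Module R N] [IsScalarTower k R N]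
    (pair : Ω1 →ₗ[k] M →ₗ[k] N)
    (dN : N →ₗ[k] N) (hdN2 : ∀ x, dN (dN x) = 0)
    (conn : M →ₗ[k] N)
    (hconn : ∀ (r : R) (m : M), conn (r • m) = pair (ddr r) m + ε r • conn m) :
    ∀ m : M,
      dN (conn (dM m) - dN (conn m)) + (conn (dM (dM m)) - dN (conn (dM m))) = 0 :=
  atiyah_class_closed_general M dM hdM2 N dN hdN2 conn
end

section
/- The formal power series identity log(x/(1 − e^{−x})) − x/2 = Σ_{k≥1} 2·ζ(2k) · x^{2k} / (2k·(2πi)^{2k}) holds, where ζ is the Riemann zeta function. -/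
/-!
The Todd series is `Q = ∑ B'ₙ xⁿ / n!`, the generating function of the Bernoulli numbers with
`B'₁ = +1/2`. Differentiating `Q · (eˣ - 1) = x eˣ` gives `x Q' = Q · (1 - x / (eˣ - 1))`, so
`log Q` is the series with `x (log Q)' = 1 - ∑ Bₙ xⁿ / n!`, namely `-∑_{n ≥ 1} Bₙ xⁿ / (n · n!)`.
Its `n = 1` term is `x / 2`, the other odd terms vanish, and Euler's formula
`ζ(2k) = -(2πi)^{2k} B_{2k} / (2 · (2k)!)` rewrites the even ones as `2 ζ(2k) / (2k (2πi)^{2k})`.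
-/

open PowerSeries

open Complex in
theorem riemannZeta_two_mul_nat_eq_bernoulli {k : ℕ} (hk : k ≠ 0) :
    riemannZeta (2 * k) =
      -(2 * Real.pi * I) ^ (2 * k) * bernoulli (2 * k) / (2 * (2 * k).factorial) := by
  obtain ⟨j, rfl⟩ := Nat.exists_eq_add_one_of_ne_zero hk
  rw [riemannZeta_two_mul_nat hk, show 2 * (j + 1) - 1 = 2 * j + 1 by omega, mul_pow,
    pow_mul I, I_sq]
  ring

namespace PowerSeries

variable {A : Type*} [CommRing A] [Algebra ℚ A]

theorem exp_sub_one_ne_zero [Nontrivial A] : exp A - 1 ≠ 0 := by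
  intro h
  simpa [coeff_exp] using congrArg (coeff 1) h

theorem constantCoeff_bernoulli'PowerSeries : constantCoeff (bernoulli'PowerSeries A) = 1 := by
  simp [bernoulli'PowerSeries, ← coeff_zero_eq_constantCoeff_apply]

theorem exp_mul_rescale_neg_one_exp : exp A * rescale (-1) (exp A) = 1 :=
  exp_mul_exp_neg_eq_one

theorem bernoulli'PowerSeries_mul_one_sub_exp_neg :
    bernoulli'PowerSeries A * (1 - rescale (-1) (exp A)) = X := by
  linear_combination rescale (-1) (exp A) * bernoulli'PowerSeries_mul_exp_sub_one A +
    (X - bernoulli'PowerSeries A) * exp_mul_rescale_neg_one_exp (A := A)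

theorem eq_bernoulli'PowerSeries_of_mul_one_sub_exp_neg [IsDomain A] {Q : A⟦X⟧}
    (hQ : Q * (1 - rescale (-1) (exp A)) = X) : Q = bernoulli'PowerSeries A := by
  refine mul_right_cancel₀ (exp_sub_one_ne_zero (A := A)) ?_
  linear_combination exp A * (hQ - bernoulli'PowerSeries_mul_one_sub_exp_neg (A := A)) +
    (Q - bernoulli'PowerSeries A) * exp_mul_rescale_neg_one_exp (A := A)

theorem X_mul_derivative_bernoulli'PowerSeries [IsDomain A] :
    X * d⁄dX A (bernoulli'PowerSeries A) =
      bernoulli'PowerSeries A * (1 - bernoulliPowerSeries A) := by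
  have hB' := bernoulli'PowerSeries_mul_exp_sub_one A
  have hB'_deriv := congrArg (d⁄dX A) hB'
  simp only [Derivation.leibniz, map_sub, Derivation.map_one_eq_zero, derivative_exp,
    derivative_X, smul_eq_mul, sub_zero] at hB'_deriv
  refine mul_right_cancel₀ (exp_sub_one_ne_zero (A := A)) ?_
  linear_combination X * hB'_deriv - (X + 1) * hB' +
    bernoulli'PowerSeries A * bernoulliPowerSeries_mul_exp_sub_one A

-- The constant coefficient vanishes because `x / 0 = 0` in `ℚ`.
noncomputable def logToddSeries : A⟦X⟧ :=
  mk fun n => algebraMap ℚ A (-(bernoulli n / (n * n.factorial)))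

theorem constantCoeff_logToddSeries : constantCoeff (logToddSeries (A := A)) = 0 := by
  simp [logToddSeries, ← coeff_zero_eq_constantCoeff_apply]

theorem X_mul_derivative_logToddSeries :
    X * d⁄dX A logToddSeries = 1 - bernoulliPowerSeries A := by
  ext (_ | n)
  · simp [bernoulliPowerSeries]
  · simp only [coeff_succ_X_mul, coeff_derivative, logToddSeries, bernoulliPowerSeries, coeff_mk,
      map_sub, coeff_one, Nat.succ_ne_zero, if_false, zero_sub]
    rw [← map_natCast (algebraMap ℚ A), ← map_one (algebraMap ℚ A), ← map_add, ← map_mul,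
      ← map_neg]
    congr 1
    push_cast
    field_simp

theorem bernoulli'PowerSeries_mul_derivative_logToddSeries [IsDomain A] :
    bernoulli'PowerSeries A * d⁄dX A logToddSeries = d⁄dX A (bernoulli'PowerSeries A) := by
  refine mul_left_cancel₀ (X_ne_zero (R := A)) ?_
  rw [X_mul_derivative_bernoulli'PowerSeries, ← X_mul_derivative_logToddSeries]
  ring

theorem eq_logToddSeries_of_mul_derivative [IsDomain A] {L : A⟦X⟧} (hL0 : constantCoeff L = 0)
    (hL : bernoulli'PowerSeries A * d⁄dX A L = d⁄dX A (bernoulli'PowerSeries A)) :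
    L = logToddSeries := by
  have hB' : bernoulli'PowerSeries A ≠ 0 := fun h => by
    simpa [h] using constantCoeff_bernoulli'PowerSeries (A := A)
  have := IsAddTorsionFree.of_module_rat A
  refine derivative.ext (mul_left_cancel₀ hB' ?_) (hL0.trans constantCoeff_logToddSeries.symm)
  rw [hL, bernoulli'PowerSeries_mul_derivative_logToddSeries]

theorem coeff_logToddSeries_sub_C_half_mul_X (n : ℕ) :
    coeff n (logToddSeries - C (1 / 2 : ℂ) * X) =
      if n ≠ 0 ∧ Even n then
        2 * riemannZeta n / ((n : ℂ) * (2 * (Real.pi : ℂ) * Complex.I) ^ n)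
      else 0 := by
  simp only [logToddSeries, map_sub, coeff_mk, coeff_C_mul, coeff_X, eq_ratCast, Rat.cast_neg,
    Rat.cast_div, Rat.cast_mul, Rat.cast_natCast]
  rcases Nat.even_or_odd' n with ⟨k, rfl | rfl⟩
  · rcases eq_or_ne k 0 with rfl | hk
    · simp
    rw [if_neg (by omega), if_pos ⟨by omega, even_two_mul k⟩]
    push_cast
    rw [riemannZeta_two_mul_nat_eq_bernoulli hk]
    field_simp
    ring
  · rcases eq_or_ne k 0 with rfl | hk
    · norm_num [bernoulli_one]
    rw [bernoulli_eq_zero_of_odd (odd_two_mul_add_one k) (by omega), if_neg (by omega),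
      if_neg (by simp)]
    simp

end PowerSeries

theorem log_todd_series_zeta
    (Q L : PowerSeries ℂ)
    (hQ : Q * (1 - rescale (-1) (exp ℂ)) = X)
    (hL0 : constantCoeff L = 0)
    (hL : Q * (PowerSeries.derivative ℂ L) = PowerSeries.derivative ℂ Q) :
    L - PowerSeries.C (1 / 2 : ℂ) * X =
      PowerSeries.mk (fun n =>
        if n ≠ 0 ∧ Even n then
          2 * riemannZeta n / ((n : ℂ) * (2 * (Real.pi : ℂ) * Complex.I) ^ n)
        else 0) := by
  obtain rfl := eq_bernoulli'PowerSeries_of_mul_one_sub_exp_neg hQ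
  obtain rfl := eq_logToddSeries_of_mul_derivative hL0 hL
  ext n
  rw [coeff_mk, coeff_logToddSeries_sub_C_half_mul_X]
end
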